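/- Let v₁, v₂, v₃, v₄ be C^∞ vector fields on ℝ^N with [v₁,v₂] = [v₁,v₃] = [v₁,v₄] = 0 and [v₂,v₃] = [v₂,v₄] = 0. Then the bivector field v₁,C ∧ v₂,C + v₃,V ∧ v₄,V on ℝ^N × ℝ^N is a Poisson tensor. -/

import Mathlib

open scoped BigOperators

/-- Partial derivative of `f : ℝ^N → ℝ` in the `s`-th coordinate direction. -/
noncomputable def pd {N : ℕ} (f : (Fin N → ℝ) → ℝ) (s : Fin N) (x : Fin N → ℝ) : ℝ :=
  fderiv ℝ f x (Pi.single s 1)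

/-- Coordinate direction on `ℝ^N × ℝ^N` indexed by `Fin N ⊕ Fin N`. -/
noncomputable def dir (N : ℕ) (a : Fin N ⊕ Fin N) : (Fin N → ℝ) × (Fin N → ℝ) :=
  Sum.elim (fun i => (Pi.single i 1, 0)) (fun i => (0, Pi.single i 1)) a

/-- Partial derivative on `ℝ^N × ℝ^N` in the `a`-th coordinate direction. -/
noncomputable def pdT {N : ℕ} (F : (Fin N → ℝ) × (Fin N → ℝ) → ℝ)
    (a : Fin N ⊕ Fin N) (z : (Fin N → ℝ) × (Fin N → ℝ)) : ℝ :=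
  fderiv ℝ F z (dir N a)

/-- `π` is a Poisson tensor on `ℝ^N`: a smooth antisymmetric bivector field
satisfying the Jacobi identity. -/
def IsPoisson {N : ℕ} (π : (Fin N → ℝ) → Matrix (Fin N) (Fin N) ℝ) : Prop :=
  (∀ i j, ContDiff ℝ (⊤ : ℕ∞) fun x => π x i j) ∧
  (∀ x i j, π x j i = - π x i j) ∧
  (∀ x i j k, ∑ s, (π x i s * pd (fun x => π x j k) s x
      + π x j s * pd (fun x => π x k i) s x
      + π x k s * pd (fun x => π x i j) s x) = 0)

/-- `v` is a (smooth) Poisson vector field for `π` (i.e. `L_v π = 0`). -/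
def IsPoissonVF {N : ℕ} (π : (Fin N → ℝ) → Matrix (Fin N) (Fin N) ℝ)
    (v : (Fin N → ℝ) → Fin N → ℝ) : Prop :=
  (∀ i, ContDiff ℝ (⊤ : ℕ∞) fun x => v x i) ∧
  (∀ x i j, ∑ s, (pd (fun x => π x i j) s x * v x s
      - π x s j * pd (fun x => v x i) s x
      - π x i s * pd (fun x => v x j) s x) = 0)

/-- The tangent lift `π_TM` of `π` to `ℝ^N × ℝ^N`. -/
noncomputable def tlift {N : ℕ} (π : (Fin N → ℝ) → Matrix (Fin N) (Fin N) ℝ)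
    (z : (Fin N → ℝ) × (Fin N → ℝ)) : Matrix (Fin N ⊕ Fin N) (Fin N ⊕ Fin N) ℝ :=
  Matrix.of fun a b =>
    match a, b with
    | Sum.inl _, Sum.inl _ => 0
    | Sum.inl i, Sum.inr j => π z.1 i j
    | Sum.inr i, Sum.inl j => π z.1 i j
    | Sum.inr i, Sum.inr j => ∑ s, pd (fun x => π x i j) s z.1 * z.2 s

/-- The complete lift `v_C` of a vector field `v`. -/
noncomputable def liftC {N : ℕ} (v : (Fin N → ℝ) → Fin N → ℝ)
    (z : (Fin N → ℝ) × (Fin N → ℝ)) : Fin N ⊕ Fin N → ℝ :=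
  Sum.elim (fun i => v z.1 i) (fun i => ∑ s, pd (fun x => v x i) s z.1 * z.2 s)

/-- The vertical lift `v_V` of a vector field `v`. -/
def liftV {N : ℕ} (v : (Fin N → ℝ) → Fin N → ℝ)
    (z : (Fin N → ℝ) × (Fin N → ℝ)) : Fin N ⊕ Fin N → ℝ :=
  Sum.elim (fun _ => 0) (fun i => v z.1 i)

/-- The wedge `u ∧ w` of two vector fields, as a bivector field. -/
def wedge {Z ι : Type*} (u w : Z → ι → ℝ) (z : Z) : Matrix ι ι ℝ :=
  Matrix.of fun a b => u z a * w z b - u z b * w z a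

/-- A Poisson tensor on `ℝ^N × ℝ^N`: a smooth antisymmetric bivector field
satisfying the Jacobi identity. -/
def IsPoissonT {N : ℕ}
    (P : (Fin N → ℝ) × (Fin N → ℝ) → Matrix (Fin N ⊕ Fin N) (Fin N ⊕ Fin N) ℝ) : Prop :=
  (∀ a b, ContDiff ℝ (⊤ : ℕ∞) fun z => P z a b) ∧
  (∀ z a b, P z b a = - P z a b) ∧
  (∀ z a b c, ∑ s, (P z a s * pdT (fun z => P z b c) s z
      + P z b s * pdT (fun z => P z c a) s z
      + P z c s * pdT (fun z => P z a b) s z) = 0)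

/-- `c` is a Casimir function for `π` on `ℝ^N`. -/
def IsCasimir {N : ℕ} (π : (Fin N → ℝ) → Matrix (Fin N) (Fin N) ℝ)
    (c : (Fin N → ℝ) → ℝ) : Prop :=
  ContDiff ℝ (⊤ : ℕ∞) c ∧ ∀ x j, ∑ i, pd c i x * π x i j = 0

/-- `F` is a Casimir function for the bivector field `P` on `ℝ^N × ℝ^N`. -/
def IsCasimirT {N : ℕ}
    (P : (Fin N → ℝ) × (Fin N → ℝ) → Matrix (Fin N ⊕ Fin N) (Fin N ⊕ Fin N) ℝ)
    (F : (Fin N → ℝ) × (Fin N → ℝ) → ℝ) : Prop :=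
  ∀ z b, ∑ a, pdT F a z * P z a b = 0

/-- `f ∘ q : ℝ^N × ℝ^N → ℝ`. -/
def fq {N : ℕ} (f : (Fin N → ℝ) → ℝ) (z : (Fin N → ℝ) × (Fin N → ℝ)) : ℝ := f z.1

/-- The fiber-wise linear function `l_{df}` on `ℝ^N × ℝ^N`. -/
noncomputable def ldf {N : ℕ} (f : (Fin N → ℝ) → ℝ) (z : (Fin N → ℝ) × (Fin N → ℝ)) : ℝ :=
  ∑ s, pd f s z.1 * z.2 s

/-- The commutator `[v,w]` of two vector fields on `ℝ^N`. -/
noncomputable def vbr {N : ℕ} (v w : (Fin N → ℝ) → Fin N → ℝ)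
    (x : Fin N → ℝ) (i : Fin N) : ℝ :=
  ∑ s, (v x s * pd (fun x => w x i) s x - w x s * pd (fun x => v x i) s x)

section calc1
variable {E : Type*} [NormedAddCommGroup E] [NormedSpace ℝ E] {f g : E → ℝ} {x v : E}

lemma fdapp_add (hf : DifferentiableAt ℝ f x) (hg : DifferentiableAt ℝ g x) :
    fderiv ℝ (fun y => f y + g y) x v = fderiv ℝ f x v + fderiv ℝ g x v := by
  rw [fderiv_fun_add hf hg]; rfl

lemma fdapp_sub (hf : DifferentiableAt ℝ f x) (hg : DifferentiableAt ℝ g x) :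
    fderiv ℝ (fun y => f y - g y) x v = fderiv ℝ f x v - fderiv ℝ g x v := by
  rw [fderiv_fun_sub hf hg]; rfl

lemma fdapp_mul (hf : DifferentiableAt ℝ f x) (hg : DifferentiableAt ℝ g x) :
    fderiv ℝ (fun y => f y * g y) x v = fderiv ℝ f x v * g x + f x * fderiv ℝ g x v := by
  rw [fderiv_fun_mul hf hg]
  simp [ContinuousLinearMap.add_apply, ContinuousLinearMap.smul_apply, smul_eq_mul]
  ring

lemma fdapp_sum {ι : Type*} {u : Finset ι} {F : ι → E → ℝ}
    (h : ∀ i ∈ u, DifferentiableAt ℝ (F i) x) :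
    fderiv ℝ (fun y => ∑ i ∈ u, F i y) x v = ∑ i ∈ u, fderiv ℝ (F i) x v := by
  rw [fderiv_fun_sum h]; simp

lemma fdapp_const (c : ℝ) : fderiv ℝ (fun _ : E => c) x v = 0 := by
  rw [fderiv_fun_const]; simp

end calc1

section pdlemmas
variable {N : ℕ}

lemma contDiff_pd {f : (Fin N → ℝ) → ℝ} (hf : ContDiff ℝ (⊤ : ℕ∞) f) (s : Fin N) :
    ContDiff ℝ (⊤ : ℕ∞) (pd f s) :=
  (hf.fderiv_right (by simp)).clm_apply contDiff_const

lemma pd_symm {f : (Fin N → ℝ) → ℝ} (hf : ContDiff ℝ (⊤ : ℕ∞) f) (s t : Fin N) (x : Fin N → ℝ) :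
    pd (pd f s) t x = pd (pd f t) s x := by
  have h1 : ContDiff ℝ (⊤ : ℕ∞) (fderiv ℝ f) := hf.fderiv_right (by simp)
  have hd : ∀ y, HasFDerivAt f (fderiv ℝ f y) y := fun y =>
    (hf.differentiable (by simp) y).hasFDerivAt
  have hx : HasFDerivAt (fderiv ℝ f) (fderiv ℝ (fderiv ℝ f) x) x :=
    (h1.differentiable (by simp) x).hasFDerivAt
  have hs := second_derivative_symmetric hd hx (Pi.single s 1) (Pi.single t 1)
  have key : ∀ w : Fin N → ℝ,
      fderiv ℝ (fun y => fderiv ℝ f y w) x = (fderiv ℝ (fderiv ℝ f) x).flip w := by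
    intro w
    rw [fderiv_clm_apply (h1.differentiable (by simp) x) (differentiableAt_const w)]
    simp
  unfold pd
  rw [key, key]
  simpa using hs.symm

lemma hasFDerivAt_fq {f : (Fin N → ℝ) → ℝ} (hf : ContDiff ℝ (⊤ : ℕ∞) f)
    (z : (Fin N → ℝ) × (Fin N → ℝ)) :
    HasFDerivAt (fq f) ((fderiv ℝ f z.1).comp (ContinuousLinearMap.fst ℝ _ _)) z :=
  ((hf.differentiable (by simp) z.1).hasFDerivAt).comp z hasFDerivAt_fst

lemma pdT_fq_inl {f : (Fin N → ℝ) → ℝ} (hf : ContDiff ℝ (⊤ : ℕ∞) f) (s : Fin N)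
    (z : (Fin N → ℝ) × (Fin N → ℝ)) : pdT (fq f) (Sum.inl s) z = pd f s z.1 := by
  unfold pdT pd
  rw [(hasFDerivAt_fq hf z).fderiv]
  simp [dir]

lemma pdT_fq_inr {f : (Fin N → ℝ) → ℝ} (hf : ContDiff ℝ (⊤ : ℕ∞) f) (s : Fin N)
    (z : (Fin N → ℝ) × (Fin N → ℝ)) : pdT (fq f) (Sum.inr s) z = 0 := by
  unfold pdT
  rw [(hasFDerivAt_fq hf z).fderiv]
  simp [dir]

lemma contDiff_fq {f : (Fin N → ℝ) → ℝ} (hf : ContDiff ℝ (⊤ : ℕ∞) f) : ContDiff ℝ (⊤ : ℕ∞) (fq f) :=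
  hf.comp contDiff_fst

lemma contDiff_ldf {f : (Fin N → ℝ) → ℝ} (hf : ContDiff ℝ (⊤ : ℕ∞) f) : ContDiff ℝ (⊤ : ℕ∞) (ldf f) := by
  unfold ldf
  exact ContDiff.sum fun s _ =>
    (((contDiff_pd hf s).comp contDiff_fst).mul ((contDiff_apply ℝ ℝ s).comp contDiff_snd))

lemma hasFDerivAt_ldf {f : (Fin N → ℝ) → ℝ} (hf : ContDiff ℝ (⊤ : ℕ∞) f)
    (z : (Fin N → ℝ) × (Fin N → ℝ)) :
    HasFDerivAt (ldf f)
      (∑ s, (z.2 s • ((fderiv ℝ (pd f s) z.1).comp (ContinuousLinearMap.fst ℝ _ _))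
        + pd f s z.1 • ((ContinuousLinearMap.proj s).comp
            (ContinuousLinearMap.snd ℝ (Fin N → ℝ) (Fin N → ℝ))))) z := by
  apply HasFDerivAt.fun_sum
  intro s _
  have h1 : HasFDerivAt (fun z : (Fin N → ℝ) × (Fin N → ℝ) => pd f s z.1)
      ((fderiv ℝ (pd f s) z.1).comp (ContinuousLinearMap.fst ℝ _ _)) z :=
    (((contDiff_pd hf s).differentiable (by simp) z.1).hasFDerivAt).comp z hasFDerivAt_fst
  have h2 : HasFDerivAt (fun z : (Fin N → ℝ) × (Fin N → ℝ) => z.2 s)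
      ((ContinuousLinearMap.proj s).comp
        (ContinuousLinearMap.snd ℝ (Fin N → ℝ) (Fin N → ℝ))) z :=
    ((ContinuousLinearMap.proj s).comp
        (ContinuousLinearMap.snd ℝ (Fin N → ℝ) (Fin N → ℝ))).hasFDerivAt
  have h3 := h1.mul h2
  rw [add_comm] at h3
  exact h3

lemma pdT_ldf_inl {f : (Fin N → ℝ) → ℝ} (hf : ContDiff ℝ (⊤ : ℕ∞) f) (t : Fin N)
    (z : (Fin N → ℝ) × (Fin N → ℝ)) :
    pdT (ldf f) (Sum.inl t) z = ∑ s, pd (pd f s) t z.1 * z.2 s := by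
  unfold pdT
  rw [(hasFDerivAt_ldf hf z).fderiv]
  simp [dir, pd, mul_comm]

lemma pdT_ldf_inr {f : (Fin N → ℝ) → ℝ} (hf : ContDiff ℝ (⊤ : ℕ∞) f) (t : Fin N)
    (z : (Fin N → ℝ) × (Fin N → ℝ)) :
    pdT (ldf f) (Sum.inr t) z = pd f t z.1 := by
  unfold pdT
  rw [(hasFDerivAt_ldf hf z).fderiv]
  simp [dir, Pi.single_apply, mul_ite, Finset.sum_ite_eq']

end pdlemmas

section pdcalc
variable {N : ℕ} {f g : (Fin N → ℝ) → ℝ} {x : Fin N → ℝ} {s : Fin N}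

lemma pd_sub (hf : DifferentiableAt ℝ f x) (hg : DifferentiableAt ℝ g x) :
    pd (fun y => f y - g y) s x = pd f s x - pd g s x := fdapp_sub hf hg

lemma pd_mul (hf : DifferentiableAt ℝ f x) (hg : DifferentiableAt ℝ g x) :
    pd (fun y => f y * g y) s x = pd f s x * g x + f x * pd g s x := fdapp_mul hf hg

lemma pd_sum {ι : Type*} {u : Finset ι} {F : ι → (Fin N → ℝ) → ℝ}
    (h : ∀ i ∈ u, DifferentiableAt ℝ (F i) x) :
    pd (fun y => ∑ i ∈ u, F i y) s x = ∑ i ∈ u, pd (F i) s x := fdapp_sum h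

end pdcalc

lemma pdT_zero {N : ℕ} (a : Fin N ⊕ Fin N) (z : (Fin N → ℝ) × (Fin N → ℝ)) :
    pdT (fun _ => (0:ℝ)) a z = 0 := fdapp_const 0

section lifts
variable {N : ℕ} {v w : (Fin N → ℝ) → Fin N → ℝ}

lemma liftC_inl_eq (v : (Fin N → ℝ) → Fin N → ℝ) (i : Fin N) :
    (fun z => liftC v z (Sum.inl i)) = fq (fun x => v x i) := rfl

lemma liftC_inr_eq (v : (Fin N → ℝ) → Fin N → ℝ) (i : Fin N) :
    (fun z => liftC v z (Sum.inr i)) = ldf (fun x => v x i) := rfl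

lemma liftV_inl_eq (v : (Fin N → ℝ) → Fin N → ℝ) (i : Fin N) :
    (fun z : (Fin N → ℝ) × (Fin N → ℝ) => liftV v z (Sum.inl i)) = fun _ => (0:ℝ) := rfl

lemma liftV_inr_eq (v : (Fin N → ℝ) → Fin N → ℝ) (i : Fin N) :
    (fun z => liftV v z (Sum.inr i)) = fq (fun x => v x i) := rfl

lemma liftC_inl_apply (z : (Fin N → ℝ) × (Fin N → ℝ)) (i : Fin N) :
    liftC v z (Sum.inl i) = v z.1 i := rfl

lemma liftC_inr_apply (z : (Fin N → ℝ) × (Fin N → ℝ)) (i : Fin N) :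
    liftC v z (Sum.inr i) = ldf (fun x => v x i) z := rfl

lemma liftV_inl_apply (z : (Fin N → ℝ) × (Fin N → ℝ)) (i : Fin N) :
    liftV v z (Sum.inl i) = 0 := rfl

lemma liftV_inr_apply (z : (Fin N → ℝ) × (Fin N → ℝ)) (i : Fin N) :
    liftV v z (Sum.inr i) = v z.1 i := rfl

lemma contDiff_liftC (hv : ∀ i, ContDiff ℝ (⊤ : ℕ∞) fun x => v x i) (a : Fin N ⊕ Fin N) :
    ContDiff ℝ (⊤ : ℕ∞) fun z => liftC v z a := by
  cases a with
  | inl i => exact contDiff_fq (hv i)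
  | inr i => exact contDiff_ldf (hv i)

lemma contDiff_liftV (hv : ∀ i, ContDiff ℝ (⊤ : ℕ∞) fun x => v x i) (a : Fin N ⊕ Fin N) :
    ContDiff ℝ (⊤ : ℕ∞) fun z => liftV v z a := by
  cases a with
  | inl i => exact contDiff_const
  | inr i => exact contDiff_fq (hv i)

lemma comm_VV (hv : ∀ i, ContDiff ℝ (⊤ : ℕ∞) fun x => v x i) (hw : ∀ i, ContDiff ℝ (⊤ : ℕ∞) fun x => w x i)
    (z : (Fin N → ℝ) × (Fin N → ℝ)) (i : Fin N ⊕ Fin N) :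
    ∑ s, (liftV v z s * pdT (fun z => liftV w z i) s z
        - liftV w z s * pdT (fun z => liftV v z i) s z) = 0 := by
  rw [Fintype.sum_sum_type]
  cases i with
  | inl i₀ =>
    simp only [liftV_inl_eq, pdT_zero]
    simp [liftV_inl_apply, liftV_inr_apply]
  | inr i₀ =>
    simp only [liftV_inr_eq, pdT_fq_inr (hv i₀), pdT_fq_inr (hw i₀), pdT_fq_inl (hv i₀),
      pdT_fq_inl (hw i₀)]
    simp [liftV_inl_apply, liftV_inr_apply]

lemma comm_CV (hv : ∀ i, ContDiff ℝ (⊤ : ℕ∞) fun x => v x i) (hw : ∀ i, ContDiff ℝ (⊤ : ℕ∞) fun x => w x i)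
    (hvw : ∀ x i, vbr v w x i = 0)
    (z : (Fin N → ℝ) × (Fin N → ℝ)) (i : Fin N ⊕ Fin N) :
    ∑ s, (liftC v z s * pdT (fun z => liftV w z i) s z
        - liftV w z s * pdT (fun z => liftC v z i) s z) = 0 := by
  rw [Fintype.sum_sum_type]
  cases i with
  | inl i₀ =>
    simp only [liftV_inl_eq, liftC_inl_eq, pdT_zero, pdT_fq_inr (hv i₀), pdT_fq_inl (hv i₀)]
    simp [liftV_inl_apply, liftV_inr_apply]
  | inr i₀ =>
    simp only [liftV_inr_eq, liftC_inr_eq, pdT_fq_inl (hw i₀), pdT_fq_inr (hw i₀),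
      pdT_ldf_inr (hv i₀), pdT_ldf_inl (hv i₀)]
    simp only [liftC_inl_apply, liftV_inl_apply, liftV_inr_apply, zero_mul, mul_zero,
      sub_zero, zero_sub]
    have h := hvw z.1 i₀
    unfold vbr at h
    rw [Finset.sum_sub_distrib] at h
    rw [Finset.sum_neg_distrib]
    linarith

lemma comm_CC (hv : ∀ i, ContDiff ℝ (⊤ : ℕ∞) fun x => v x i) (hw : ∀ i, ContDiff ℝ (⊤ : ℕ∞) fun x => w x i)
    (hvw : ∀ x i, vbr v w x i = 0)
    (z : (Fin N → ℝ) × (Fin N → ℝ)) (i : Fin N ⊕ Fin N) :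
    ∑ s, (liftC v z s * pdT (fun z => liftC w z i) s z
        - liftC w z s * pdT (fun z => liftC v z i) s z) = 0 := by
  rw [Fintype.sum_sum_type]
  cases i with
  | inl i₀ =>
    simp only [liftC_inl_eq, pdT_fq_inl (hv i₀), pdT_fq_inl (hw i₀), pdT_fq_inr (hv i₀),
      pdT_fq_inr (hw i₀)]
    simp only [liftC_inl_apply, liftC_inr_apply, mul_zero, sub_zero, sub_self,
      Finset.sum_const_zero, add_zero]
    simpa [vbr] using hvw z.1 i₀
  | inr i₀ =>
    have dv : ∀ (j : Fin N) (y : Fin N → ℝ), DifferentiableAt ℝ (fun x => v x j) y :=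
      fun j y => ((hv j).differentiable (by simp)).differentiableAt
    have dw : ∀ (j : Fin N) (y : Fin N → ℝ), DifferentiableAt ℝ (fun x => w x j) y :=
      fun j y => ((hw j).differentiable (by simp)).differentiableAt
    have dpv : ∀ (j s : Fin N) (y : Fin N → ℝ), DifferentiableAt ℝ (pd (fun x => v x j) s) y :=
      fun j s y => ((contDiff_pd (hv j) s).differentiable (by simp)).differentiableAt
    have dpw : ∀ (j s : Fin N) (y : Fin N → ℝ), DifferentiableAt ℝ (pd (fun x => w x j) s) y :=
      fun j s y => ((contDiff_pd (hw j) s).differentiable (by simp)).differentiableAt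
    have hz : ∀ t : Fin N, pd (fun x => vbr v w x i₀) t z.1 = 0 := by
      intro t
      have e : (fun x => vbr v w x i₀) = fun _ => (0:ℝ) := funext fun x => hvw x i₀
      rw [e]
      exact fdapp_const 0
    have hexp : ∀ t : Fin N, pd (fun x => vbr v w x i₀) t z.1
        = ∑ s, (pd (fun x => v x s) t z.1 * pd (fun x => w x i₀) s z.1
            + v z.1 s * pd (pd (fun x => w x i₀) s) t z.1
            - (pd (fun x => w x s) t z.1 * pd (fun x => v x i₀) s z.1
            + w z.1 s * pd (pd (fun x => v x i₀) s) t z.1)) := by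
      intro t
      have e : (fun x => vbr v w x i₀)
          = fun x => ∑ s, (v x s * pd (fun x => w x i₀) s x
              - w x s * pd (fun x => v x i₀) s x) := rfl
      rw [e, pd_sum (fun s _ => ((dv s z.1).fun_mul (dpw i₀ s z.1)).fun_sub ((dw s z.1).fun_mul (dpv i₀ s z.1)))]
      refine Finset.sum_congr rfl fun s _ => ?_
      rw [pd_sub ((dv s z.1).fun_mul (dpw i₀ s z.1)) ((dw s z.1).fun_mul (dpv i₀ s z.1)),
        pd_mul (dv s z.1) (dpw i₀ s z.1), pd_mul (dw s z.1) (dpv i₀ s z.1)]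
    have main : ∑ t, z.2 t * pd (fun x => vbr v w x i₀) t z.1 = 0 := by
      simp [hz]
    simp only [liftC_inr_eq, pdT_ldf_inl (hv i₀), pdT_ldf_inl (hw i₀), pdT_ldf_inr (hv i₀),
      pdT_ldf_inr (hw i₀)]
    simp only [liftC_inl_apply, liftC_inr_apply]
    unfold ldf
    rw [← main]
    simp only [hexp]
    simp only [Finset.mul_sum, Finset.sum_mul, ← Finset.sum_sub_distrib, ← Finset.sum_add_distrib]
    rw [Finset.sum_comm]
    refine Finset.sum_congr rfl fun t _ => Finset.sum_congr rfl fun s _ => ?_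
    rw [pd_symm (hw i₀), pd_symm (hv i₀)]
    ring

end lifts

section poly
variable {E : Type*} [NormedAddCommGroup E] [NormedSpace ℝ E] {x v : E}
  {f1 f2 f3 f4 f5 f6 f7 f8 : E → ℝ}

lemma fdapp_poly (h1 : DifferentiableAt ℝ f1 x) (h2 : DifferentiableAt ℝ f2 x)
    (h3 : DifferentiableAt ℝ f3 x) (h4 : DifferentiableAt ℝ f4 x)
    (h5 : DifferentiableAt ℝ f5 x) (h6 : DifferentiableAt ℝ f6 x)
    (h7 : DifferentiableAt ℝ f7 x) (h8 : DifferentiableAt ℝ f8 x) :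
    fderiv ℝ (fun y => f1 y * f2 y - f3 y * f4 y + (f5 y * f6 y - f7 y * f8 y)) x v
    = fderiv ℝ f1 x v * f2 x + f1 x * fderiv ℝ f2 x v
      - (fderiv ℝ f3 x v * f4 x + f3 x * fderiv ℝ f4 x v)
      + (fderiv ℝ f5 x v * f6 x + f5 x * fderiv ℝ f6 x v
      - (fderiv ℝ f7 x v * f8 x + f7 x * fderiv ℝ f8 x v)) := by
  have A := ((h1.hasFDerivAt.mul h2.hasFDerivAt).sub
      (h3.hasFDerivAt.mul h4.hasFDerivAt)).add
      ((h5.hasFDerivAt.mul h6.hasFDerivAt).sub (h7.hasFDerivAt.mul h8.hasFDerivAt))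
  have B : fderiv ℝ (fun y => f1 y * f2 y - f3 y * f4 y + (f5 y * f6 y - f7 y * f8 y)) x
      = f1 x • fderiv ℝ f2 x + f2 x • fderiv ℝ f1 x
        - (f3 x • fderiv ℝ f4 x + f4 x • fderiv ℝ f3 x)
        + (f5 x • fderiv ℝ f6 x + f6 x • fderiv ℝ f5 x
        - (f7 x • fderiv ℝ f8 x + f8 x • fderiv ℝ f7 x)) := A.fderiv
  rw [B]
  simp [ContinuousLinearMap.add_apply, ContinuousLinearMap.sub_apply,
    ContinuousLinearMap.smul_apply, smul_eq_mul]
  ring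
end poly

lemma jacobi_core {N : ℕ}
    (p q r t : (Fin N → ℝ) × (Fin N → ℝ) → (Fin N ⊕ Fin N) → ℝ)
    (hp : ∀ i, ContDiff ℝ (⊤ : ℕ∞) fun z => p z i) (hq : ∀ i, ContDiff ℝ (⊤ : ℕ∞) fun z => q z i)
    (hr : ∀ i, ContDiff ℝ (⊤ : ℕ∞) fun z => r z i) (ht : ∀ i, ContDiff ℝ (⊤ : ℕ∞) fun z => t z i)
    (hpq : ∀ z i, ∑ s, (p z s * pdT (fun z => q z i) s z - q z s * pdT (fun z => p z i) s z) = 0)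
    (hpr : ∀ z i, ∑ s, (p z s * pdT (fun z => r z i) s z - r z s * pdT (fun z => p z i) s z) = 0)
    (hpt : ∀ z i, ∑ s, (p z s * pdT (fun z => t z i) s z - t z s * pdT (fun z => p z i) s z) = 0)
    (hqr : ∀ z i, ∑ s, (q z s * pdT (fun z => r z i) s z - r z s * pdT (fun z => q z i) s z) = 0)
    (hqt : ∀ z i, ∑ s, (q z s * pdT (fun z => t z i) s z - t z s * pdT (fun z => q z i) s z) = 0)
    (hrt : ∀ z i, ∑ s, (r z s * pdT (fun z => t z i) s z - t z s * pdT (fun z => r z i) s z) = 0)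
    (z : (Fin N → ℝ) × (Fin N → ℝ)) (a b c : Fin N ⊕ Fin N) :
    ∑ s, ((wedge p q z + wedge r t z) a s
            * pdT (fun z => (wedge p q z + wedge r t z) b c) s z
        + (wedge p q z + wedge r t z) b s
            * pdT (fun z => (wedge p q z + wedge r t z) c a) s z
        + (wedge p q z + wedge r t z) c s
            * pdT (fun z => (wedge p q z + wedge r t z) a b) s z) = 0 := by
  have dp : ∀ i, DifferentiableAt ℝ (fun z => p z i) z :=
    fun i => ((hp i).differentiable (by simp)).differentiableAt
  have dq : ∀ i, DifferentiableAt ℝ (fun z => q z i) z :=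
    fun i => ((hq i).differentiable (by simp)).differentiableAt
  have dr : ∀ i, DifferentiableAt ℝ (fun z => r z i) z :=
    fun i => ((hr i).differentiable (by simp)).differentiableAt
  have dt : ∀ i, DifferentiableAt ℝ (fun z => t z i) z :=
    fun i => ((ht i).differentiable (by simp)).differentiableAt
  have hD : ∀ (i j : Fin N ⊕ Fin N) (s : Fin N ⊕ Fin N),
      pdT (fun z => (wedge p q z + wedge r t z) i j) s z
      = pdT (fun z => p z i) s z * q z j + p z i * pdT (fun z => q z j) s z
        - (pdT (fun z => p z j) s z * q z i + p z j * pdT (fun z => q z i) s z)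
        + (pdT (fun z => r z i) s z * t z j + r z i * pdT (fun z => t z j) s z
        - (pdT (fun z => r z j) s z * t z i + r z j * pdT (fun z => t z i) s z)) := by
    intro i j s
    exact fdapp_poly (dp i) (dq j) (dp j) (dq i) (dr i) (dt j) (dr j) (dt i)
  have hW : ∀ i j : Fin N ⊕ Fin N, (wedge p q z + wedge r t z) i j
      = p z i * q z j - p z j * q z i + (r z i * t z j - r z j * t z i) := fun i j => rfl
  calc ∑ s, ((wedge p q z + wedge r t z) a s
            * pdT (fun z => (wedge p q z + wedge r t z) b c) s z
        + (wedge p q z + wedge r t z) b s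
            * pdT (fun z => (wedge p q z + wedge r t z) c a) s z
        + (wedge p q z + wedge r t z) c s
            * pdT (fun z => (wedge p q z + wedge r t z) a b) s z)
      = ∑ s, ((p z b * q z c - p z c * q z b) * (p z s * pdT (fun z => q z a) s z - q z s * pdT (fun z => p z a) s z)
        + (p z c * q z a - p z a * q z c) * (p z s * pdT (fun z => q z b) s z - q z s * pdT (fun z => p z b) s z)
        + (p z a * q z b - p z b * q z a) * (p z s * pdT (fun z => q z c) s z - q z s * pdT (fun z => p z c) s z)
        + (q z b * t z c - q z c * t z b) * (p z s * pdT (fun z => r z a) s z - r z s * pdT (fun z => p z a) s z)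
        + (q z c * t z a - q z a * t z c) * (p z s * pdT (fun z => r z b) s z - r z s * pdT (fun z => p z b) s z)
        + (q z a * t z b - q z b * t z a) * (p z s * pdT (fun z => r z c) s z - r z s * pdT (fun z => p z c) s z)
        + (q z c * r z b - q z b * r z c) * (p z s * pdT (fun z => t z a) s z - t z s * pdT (fun z => p z a) s z)
        + (q z a * r z c - q z c * r z a) * (p z s * pdT (fun z => t z b) s z - t z s * pdT (fun z => p z b) s z)
        + (q z b * r z a - q z a * r z b) * (p z s * pdT (fun z => t z c) s z - t z s * pdT (fun z => p z c) s z)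
        + (p z c * t z b - p z b * t z c) * (q z s * pdT (fun z => r z a) s z - r z s * pdT (fun z => q z a) s z)
        + (p z a * t z c - p z c * t z a) * (q z s * pdT (fun z => r z b) s z - r z s * pdT (fun z => q z b) s z)
        + (p z b * t z a - p z a * t z b) * (q z s * pdT (fun z => r z c) s z - r z s * pdT (fun z => q z c) s z)
        + (p z b * r z c - p z c * r z b) * (q z s * pdT (fun z => t z a) s z - t z s * pdT (fun z => q z a) s z)
        + (p z c * r z a - p z a * r z c) * (q z s * pdT (fun z => t z b) s z - t z s * pdT (fun z => q z b) s z)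
        + (p z a * r z b - p z b * r z a) * (q z s * pdT (fun z => t z c) s z - t z s * pdT (fun z => q z c) s z)
        + (r z b * t z c - r z c * t z b) * (r z s * pdT (fun z => t z a) s z - t z s * pdT (fun z => r z a) s z)
        + (r z c * t z a - r z a * t z c) * (r z s * pdT (fun z => t z b) s z - t z s * pdT (fun z => r z b) s z)
        + (r z a * t z b - r z b * t z a) * (r z s * pdT (fun z => t z c) s z - t z s * pdT (fun z => r z c) s z)) := by
        refine Finset.sum_congr rfl fun s _ => ?_
        rw [hD b c s, hD c a s, hD a b s, hW a s, hW b s, hW c s]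
        ring
    _ = 0 := by
        simp only [Finset.sum_add_distrib, ← Finset.mul_sum]
        rw [hpq z a, hpq z b, hpq z c, hpr z a, hpr z b, hpr z c, hpt z a, hpt z b, hpt z c,
          hqr z a, hqr z b, hqr z c, hqt z a, hqt z b, hqt z c, hrt z a, hrt z b, hrt z c]
        ring

/-- `v₁_C ∧ v₂_C + v₃_V ∧ v₄_V` is a Poisson tensor under the
stated commutation assumptions. -/
theorem sum_wedge_CC_VV_is_poisson {N : ℕ}
    (v₁ v₂ v₃ v₄ : (Fin N → ℝ) → Fin N → ℝ)
    (h₁ : ∀ i, ContDiff ℝ (⊤ : ℕ∞) fun x => v₁ x i) (h₂ : ∀ i, ContDiff ℝ (⊤ : ℕ∞) fun x => v₂ x i)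
    (h₃ : ∀ i, ContDiff ℝ (⊤ : ℕ∞) fun x => v₃ x i) (h₄ : ∀ i, ContDiff ℝ (⊤ : ℕ∞) fun x => v₄ x i)
    (h₁₂ : ∀ x i, vbr v₁ v₂ x i = 0) (h₁₃ : ∀ x i, vbr v₁ v₃ x i = 0)
    (h₁₄ : ∀ x i, vbr v₁ v₄ x i = 0) (h₂₃ : ∀ x i, vbr v₂ v₃ x i = 0)
    (h₂₄ : ∀ x i, vbr v₂ v₄ x i = 0) :
    IsPoissonT (fun z => wedge (liftC v₁) (liftC v₂) z + wedge (liftV v₃) (liftV v₄) z) := by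
  refine ⟨?_, ?_, ?_⟩
  · intro a b
    have e : (fun z => (wedge (liftC v₁) (liftC v₂) z + wedge (liftV v₃) (liftV v₄) z) a b)
        = fun z => liftC v₁ z a * liftC v₂ z b - liftC v₁ z b * liftC v₂ z a
          + (liftV v₃ z a * liftV v₄ z b - liftV v₃ z b * liftV v₄ z a) := rfl
    rw [e]
    exact ((((contDiff_liftC h₁ a).mul (contDiff_liftC h₂ b)).sub
      ((contDiff_liftC h₁ b).mul (contDiff_liftC h₂ a))).add
      (((contDiff_liftV h₃ a).mul (contDiff_liftV h₄ b)).sub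
      ((contDiff_liftV h₃ b).mul (contDiff_liftV h₄ a))))
  · intro z a b
    show liftC v₁ z b * liftC v₂ z a - liftC v₁ z a * liftC v₂ z b
        + (liftV v₃ z b * liftV v₄ z a - liftV v₃ z a * liftV v₄ z b)
      = -(liftC v₁ z a * liftC v₂ z b - liftC v₁ z b * liftC v₂ z a
        + (liftV v₃ z a * liftV v₄ z b - liftV v₃ z b * liftV v₄ z a))
    ring
  · intro z a b c
    exact jacobi_core (liftC v₁) (liftC v₂) (liftV v₃) (liftV v₄)
      (contDiff_liftC h₁) (contDiff_liftC h₂) (contDiff_liftV h₃) (contDiff_liftV h₄)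
      (comm_CC h₁ h₂ h₁₂) (comm_CV h₁ h₃ h₁₃) (comm_CV h₁ h₄ h₁₄)
      (comm_CV h₂ h₃ h₂₃) (comm_CV h₂ h₄ h₂₄) (comm_VV h₃ h₄) z a b c
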